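/- (Kiefer–Wolfowitz) Let φ_1,…,φ_m ∈ ℝ^d be feature vectors spanning ℝ^d, and let π* be a probability distribution on {1,…,m} such that V(π*) = Σ_j π*(j) φ_j φ_jᵀ is invertible. Then the following are equivalent: (i) g(π*) ≤ g(π) for every probability distribution π on {1,…,m} with V(π) invertible (π* minimizes g); (ii) det V(π*) ≥ det V(π) for every probability distribution π on {1,…,m} (π* maximizes log det V); (iii) g(π*) = d. -/

import Mathlib

open Matrix Finset

/-- The design matrix `V(w) = Σ j, w j • φ j (φ j)ᵀ` of feature vectors `φ` under
weights `w`. -/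
noncomputable def designMatrix {ι : Type*} [Fintype ι] {d : ℕ} (φ : ι → Fin d → ℝ)
    (w : ι → ℝ) : Matrix (Fin d) (Fin d) ℝ :=
  ∑ j, w j • vecMulVec (φ j) (φ j)

/-- `g(w) = max_j (φ j)ᵀ V(w)⁻¹ (φ j)`. -/
noncomputable def gOpt {ι : Type*} [Fintype ι] [Nonempty ι] {d : ℕ} (φ : ι → Fin d → ℝ)
    (w : ι → ℝ) : ℝ :=
  Finset.univ.sup' Finset.univ_nonempty (fun j => φ j ⬝ᵥ ((designMatrix φ w)⁻¹ *ᵥ φ j))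

/-!
Every design has `gOpt φ w ≥ d`, since `∑ j, w j * leverage φ w j = trace (V(w)⁻¹ * V(w)) = d`.
A maximiser of `det V` exists by compactness of the simplex, and is nondegenerate because the
`φ j` span. Moving it towards any vertex cannot increase the determinant, which to first order
says `leverage ≤ d`; hence D-optimal designs attain the least possible value `gOpt = d`, which
therefore also characterises G-optimality. Conversely, if `gOpt φ w = d` then
`trace (V(w)⁻¹ * V(v)) ≤ d` for every design `v`, and `λ ≤ exp (λ - 1)` applied to the
eigenvalues of `V(w)^(-1/2) * V(v) * V(w)^(-1/2)` gives `det V(v) ≤ det V(w)`.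
-/

theorem det_add_vecMulVec {n R : Type*} [Fintype n] [DecidableEq n] [CommRing R]
    {A : Matrix n n R} (hA : IsUnit A.det) (u v : n → R) :
    (A + vecMulVec u v).det = A.det * (1 + v ⬝ᵥ (A⁻¹ *ᵥ u)) := by
  rw [vecMulVec_eq Unit, det_add_replicateCol_mul_replicateRow hA, det_unique (n := Unit),
    Matrix.mul_assoc, ← replicateCol_mulVec]
  simp

theorem det_le_one_of_trace_le_card {n : Type*} [Fintype n] [DecidableEq n]
    {C : Matrix n n ℝ} (hC : C.PosSemidef) (htr : C.trace ≤ Fintype.card n) : C.det ≤ 1 := by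
  have hsum : ∑ i, hC.1.eigenvalues i ≤ Fintype.card n := by
    simpa [hC.1.trace_eq_sum_eigenvalues] using htr
  calc C.det = ∏ i, hC.1.eigenvalues i := by simpa using hC.1.det_eq_prod_eigenvalues
    _ ≤ ∏ i, Real.exp (hC.1.eigenvalues i - 1) :=
      prod_le_prod (fun i _ => hC.eigenvalues_nonneg i)
        fun i _ => by linarith [Real.add_one_le_exp (hC.1.eigenvalues i - 1)]
    _ = Real.exp (∑ i, hC.1.eigenvalues i - Fintype.card n) := by
      rw [← Real.exp_sum, sum_sub_distrib]; simp
    _ ≤ 1 := Real.exp_le_one_iff.mpr (by linarith)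

open scoped MatrixOrder in
theorem det_le_det_of_trace_inv_mul_le_card {n : Type*} [Fintype n] [DecidableEq n]
    {A B : Matrix n n ℝ} (hA : A.PosDef) (hB : B.PosSemidef)
    (htr : (A⁻¹ * B).trace ≤ Fintype.card n) : B.det ≤ A.det := by
  obtain ⟨S, hS, rfl⟩ : ∃ S : Matrix n n ℝ, S.PosSemidef ∧ S * S = A :=
    ⟨CFC.sqrt A, (CFC.sqrt_nonneg A).posSemidef, CFC.sqrt_mul_sqrt_self A hA.posSemidef.nonneg⟩
  have hSdet : IsUnit S.det := by
    have hSS := (isUnit_iff_isUnit_det _).mp hA.isUnit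
    rw [det_mul] at hSS
    exact isUnit_of_mul_isUnit_left hSS
  have hC : (S⁻¹ * B * S⁻¹).PosSemidef := by
    have h := hB.mul_mul_conjTranspose_same S⁻¹
    rwa [conjTranspose_nonsing_inv, hS.1.eq] at h
  have hCtr : (S⁻¹ * B * S⁻¹).trace ≤ Fintype.card n := by
    rwa [trace_mul_cycle, ← Matrix.mul_inv_rev]
  have hB_eq : B = S * (S⁻¹ * B * S⁻¹) * S := by
    rw [← Matrix.mul_assoc S, ← Matrix.mul_assoc S, mul_nonsing_inv _ hSdet, Matrix.one_mul,
      Matrix.mul_assoc, nonsing_inv_mul _ hSdet, Matrix.mul_one]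
  calc B.det = (S⁻¹ * B * S⁻¹).det * (S * S).det := by
        conv_lhs => rw [hB_eq]
        simp only [det_mul]; ring
    _ ≤ 1 * (S * S).det :=
      mul_le_mul_of_nonneg_right (det_le_one_of_trace_le_card hC hCtr) hA.det_pos.le
    _ = (S * S).det := one_mul _

/-- `s ↦ (1 + s) ^ n - s * q` has derivative `n - q` at `0` and stays above its value at `0`. -/
theorem le_of_forall_one_add_mul_le_one_add_pow {q : ℝ} {n : ℕ}
    (h : ∀ s > 0, 1 + s * q ≤ (1 + s) ^ n) : q ≤ n := by
  have hderiv : HasDerivAt (fun s : ℝ => (1 + s) ^ n - s * q) (n - q) 0 := by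
    simpa using (((hasDerivAt_id (0 : ℝ)).const_add 1).fun_pow n).fun_sub
      ((hasDerivAt_id (0 : ℝ)).mul_const q)
  refine sub_nonneg.mp (ge_of_tendsto hderiv.tendsto_slope_zero_right ?_)
  filter_upwards [self_mem_nhdsWithin] with s (hs : 0 < s)
  simp only [zero_add, add_zero, one_pow, zero_mul, sub_zero, smul_eq_mul]
  exact mul_nonneg (inv_nonneg.mpr hs.le) (by linarith [h s hs])

section DesignMatrix

variable {ι : Type*} [Fintype ι] {d : ℕ} (φ : ι → Fin d → ℝ)

noncomputable def leverage (w : ι → ℝ) (j : ι) : ℝ :=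
  φ j ⬝ᵥ ((designMatrix φ w)⁻¹ *ᵥ φ j)

theorem designMatrix_add (v w : ι → ℝ) :
    designMatrix φ (v + w) = designMatrix φ v + designMatrix φ w := by
  simp only [designMatrix, Pi.add_apply, add_smul, sum_add_distrib]

theorem designMatrix_smul (c : ℝ) (w : ι → ℝ) :
    designMatrix φ (c • w) = c • designMatrix φ w := by
  simp only [designMatrix, Pi.smul_apply, smul_eq_mul, mul_smul, smul_sum]

theorem designMatrix_single [DecidableEq ι] (j : ι) :
    designMatrix φ (Pi.single j 1) = vecMulVec (φ j) (φ j) := by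
  simp [designMatrix, Pi.single_apply]

theorem trace_mul_designMatrix (B : Matrix (Fin d) (Fin d) ℝ) (w : ι → ℝ) :
    (B * designMatrix φ w).trace = ∑ j, w j * (φ j ⬝ᵥ (B *ᵥ φ j)) := by
  simp [designMatrix, Matrix.mul_sum, mul_vecMulVec, trace_vecMulVec, dotProduct_comm]

theorem dotProduct_designMatrix_mulVec (w : ι → ℝ) (x : Fin d → ℝ) :
    x ⬝ᵥ (designMatrix φ w *ᵥ x) = ∑ j, w j * (φ j ⬝ᵥ x) ^ 2 := by
  simp only [designMatrix, sum_mulVec, dotProduct_sum, smul_mulVec, vecMulVec_mulVec,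
    dotProduct_smul]
  simp [dotProduct_comm x, sq]

theorem posSemidef_designMatrix {w : ι → ℝ} (hw : ∀ j, 0 ≤ w j) :
    (designMatrix φ w).PosSemidef :=
  posSemidef_sum _ fun j _ => (posSemidef_vecMulVec_self_star (φ j)).smul (hw j)

theorem posDef_designMatrix_of_isUnit_det {w : ι → ℝ} (hw : ∀ j, 0 ≤ w j)
    (hV : IsUnit (designMatrix φ w).det) : (designMatrix φ w).PosDef :=
  (posSemidef_designMatrix φ hw).posDef_iff_isUnit.mpr ((isUnit_iff_isUnit_det _).mpr hV)

theorem posDef_designMatrix (hspan : Submodule.span ℝ (Set.range φ) = ⊤) {w : ι → ℝ}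
    (hw : ∀ j, 0 < w j) : (designMatrix φ w).PosDef := by
  refine .of_dotProduct_mulVec_pos (posSemidef_designMatrix φ fun j => (hw j).le).1 fun x hx => ?_
  obtain ⟨j, hj⟩ : ∃ j, φ j ⬝ᵥ x ≠ 0 := by
    by_contra! h
    have hker : Submodule.span ℝ (Set.range φ) ≤ LinearMap.ker ((dotProductBilin ℝ ℝ).flip x) :=
      Submodule.span_le.mpr (Set.range_subset_iff.mpr h)
    rw [hspan] at hker
    exact hx (dotProduct_self_eq_zero.mp (hker Submodule.mem_top))
  rw [star_trivial, dotProduct_designMatrix_mulVec]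
  exact sum_pos' (fun i _ => by have := hw i; positivity)
    ⟨j, mem_univ j, by have := hw j; positivity⟩

theorem continuous_det_designMatrix : Continuous fun w => (designMatrix φ w).det := by
  unfold designMatrix
  fun_prop

theorem sum_mul_leverage {w : ι → ℝ} (hV : IsUnit (designMatrix φ w).det) :
    ∑ j, w j * leverage φ w j = d := by
  simp [leverage, ← trace_mul_designMatrix, nonsing_inv_mul _ hV]

theorem det_designMatrix_mix [DecidableEq ι] {w : ι → ℝ} (hV : IsUnit (designMatrix φ w).det)
    (j : ι) (s : ℝ) :
    (designMatrix φ ((1 + s)⁻¹ • (w + s • Pi.single j 1))).det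
      = ((1 + s) ^ d)⁻¹ * ((designMatrix φ w).det * (1 + s * leverage φ w j)) := by
  rw [designMatrix_smul, designMatrix_add, designMatrix_smul, designMatrix_single, det_smul,
    ← smul_vecMulVec, det_add_vecMulVec hV, mulVec_smul, dotProduct_smul, Fintype.card_fin,
    inv_pow, smul_eq_mul, leverage]

def IsDOptimal (w : ι → ℝ) : Prop :=
  ∀ v : ι → ℝ, (∀ j, 0 ≤ v j) → ∑ j, v j = 1 → (designMatrix φ v).det ≤ (designMatrix φ w).det

/-- Moving the weight `w` towards the vertex `j` multiplies `det V(w)` by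
`(1 + s * leverage φ w j) / (1 + s) ^ d`, which a D-optimal `w` cannot increase. -/
theorem leverage_le_of_isDOptimal {w : ι → ℝ} (hw0 : ∀ j, 0 ≤ w j) (hw1 : ∑ j, w j = 1)
    (hV : IsUnit (designMatrix φ w).det) (hopt : IsDOptimal φ w) (j : ι) :
    leverage φ w j ≤ d := by
  classical
  have hdet : 0 < (designMatrix φ w).det := (posDef_designMatrix_of_isUnit_det φ hw0 hV).det_pos
  refine le_of_forall_one_add_mul_le_one_add_pow fun s hs => ?_
  have hmem : (1 + s)⁻¹ • (w + s • Pi.single j 1) ∈ stdSimplex ℝ ι := by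
    rw [smul_add, smul_smul]
    exact convex_stdSimplex ℝ ι ⟨hw0, hw1⟩ (single_mem_stdSimplex ℝ j) (by positivity)
      (by positivity) (by field_simp)
  have hle := hopt _ hmem.1 hmem.2
  rw [det_designMatrix_mix φ hV, inv_mul_le_iff₀ (by positivity)] at hle
  exact le_of_mul_le_mul_left (by linarith) hdet

theorem exists_isDOptimal [Nonempty ι] (hspan : Submodule.span ℝ (Set.range φ) = ⊤) :
    ∃ v : ι → ℝ, (∀ j, 0 ≤ v j) ∧ ∑ j, v j = 1 ∧ IsUnit (designMatrix φ v).det ∧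
      IsDOptimal φ v := by
  set u : ι → ℝ := fun _ => (Fintype.card ι : ℝ)⁻¹
  have hu : u ∈ stdSimplex ℝ ι := ⟨fun _ => by positivity, by simp [u]⟩
  obtain ⟨v, ⟨hv0, hv1⟩, hvmax⟩ := (isCompact_stdSimplex ℝ ι).exists_isMaxOn ⟨u, hu⟩
    (continuous_det_designMatrix φ).continuousOn
  have hopt : IsDOptimal φ v := fun w hw0 hw1 => isMaxOn_iff.mp hvmax w ⟨hw0, hw1⟩
  have hupos : (designMatrix φ u).PosDef := posDef_designMatrix φ hspan fun _ => by positivity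
  exact ⟨v, hv0, hv1, (hupos.det_pos.trans_le (hopt u hu.1 hu.2)).ne'.isUnit, hopt⟩

end DesignMatrix

section GOptimality

variable {ι : Type*} [Fintype ι] [Nonempty ι] {d : ℕ} (φ : ι → Fin d → ℝ)

def IsGOptimal (w : ι → ℝ) : Prop :=
  ∀ v : ι → ℝ, (∀ j, 0 ≤ v j) → ∑ j, v j = 1 → IsUnit (designMatrix φ v).det →
    gOpt φ w ≤ gOpt φ v

theorem gOpt_le_iff {w : ι → ℝ} {c : ℝ} : gOpt φ w ≤ c ↔ ∀ j, leverage φ w j ≤ c := by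
  simp [gOpt, leverage]

theorem sum_mul_leverage_le_gOpt {v : ι → ℝ} (hv0 : ∀ j, 0 ≤ v j) (hv1 : ∑ j, v j = 1)
    (w : ι → ℝ) : ∑ j, v j * leverage φ w j ≤ gOpt φ w :=
  calc ∑ j, v j * leverage φ w j ≤ ∑ j, v j * gOpt φ w :=
        sum_le_sum fun j _ => mul_le_mul_of_nonneg_left ((gOpt_le_iff φ).mp le_rfl j) (hv0 j)
    _ = gOpt φ w := by rw [← sum_mul, hv1, one_mul]

theorem natCast_le_gOpt {w : ι → ℝ} (hw0 : ∀ j, 0 ≤ w j) (hw1 : ∑ j, w j = 1)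
    (hV : IsUnit (designMatrix φ w).det) : (d : ℝ) ≤ gOpt φ w :=
  sum_mul_leverage φ hV ▸ sum_mul_leverage_le_gOpt φ hw0 hw1 w

theorem gOpt_eq_of_isDOptimal {w : ι → ℝ} (hw0 : ∀ j, 0 ≤ w j) (hw1 : ∑ j, w j = 1)
    (hV : IsUnit (designMatrix φ w).det) (hopt : IsDOptimal φ w) : gOpt φ w = d :=
  le_antisymm ((gOpt_le_iff φ).mpr (leverage_le_of_isDOptimal φ hw0 hw1 hV hopt))
    (natCast_le_gOpt φ hw0 hw1 hV)

theorem isDOptimal_of_gOpt_eq {w : ι → ℝ} (hw0 : ∀ j, 0 ≤ w j)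
    (hV : IsUnit (designMatrix φ w).det) (hg : gOpt φ w = d) : IsDOptimal φ w :=
  fun v hv0 hv1 => det_le_det_of_trace_inv_mul_le_card
    (posDef_designMatrix_of_isUnit_det φ hw0 hV) (posSemidef_designMatrix φ hv0) (by
      rw [trace_mul_designMatrix, Fintype.card_fin, ← hg]
      exact sum_mul_leverage_le_gOpt φ hv0 hv1 w)

theorem isGOptimal_of_gOpt_eq {w : ι → ℝ} (hg : gOpt φ w = d) : IsGOptimal φ w :=
  fun _ hv0 hv1 hV => hg ▸ natCast_le_gOpt φ hv0 hv1 hV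

theorem gOpt_eq_of_isGOptimal (hspan : Submodule.span ℝ (Set.range φ) = ⊤) {w : ι → ℝ}
    (hw0 : ∀ j, 0 ≤ w j) (hw1 : ∑ j, w j = 1) (hV : IsUnit (designMatrix φ w).det)
    (hopt : IsGOptimal φ w) : gOpt φ w = d := by
  obtain ⟨v, hv0, hv1, hV', hvopt⟩ := exists_isDOptimal φ hspan
  exact le_antisymm ((hopt v hv0 hv1 hV').trans (gOpt_eq_of_isDOptimal φ hv0 hv1 hV' hvopt).le)
    (natCast_le_gOpt φ hw0 hw1 hV)

end GOptimality

/-- **Kiefer–Wolfowitz theorem.** Let `φ 1, …, φ m ∈ ℝ^d` span `ℝ^d` and let `ws` be a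
probability distribution on `{1, …, m}` with `V(ws)` invertible. Then the following are
equivalent: (i) `ws` minimizes `g` over probability distributions with invertible design
matrix; (ii) `ws` maximizes `det V` over probability distributions; (iii) `g(ws) = d`. -/
theorem kiefer_wolfowitz
    {ι : Type*} [Fintype ι] [Nonempty ι] {d : ℕ} (φ : ι → Fin d → ℝ)
    (hspan : Submodule.span ℝ (Set.range φ) = ⊤)
    (ws : ι → ℝ) (hws0 : ∀ j, 0 ≤ ws j) (hws1 : ∑ j, ws j = 1)
    (hVs : IsUnit (designMatrix φ ws).det) :
    ((∀ w : ι → ℝ, (∀ j, 0 ≤ w j) → ∑ j, w j = 1 → IsUnit (designMatrix φ w).det →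
        gOpt φ ws ≤ gOpt φ w) ↔
      (∀ w : ι → ℝ, (∀ j, 0 ≤ w j) → ∑ j, w j = 1 →
        (designMatrix φ w).det ≤ (designMatrix φ ws).det)) ∧
    ((∀ w : ι → ℝ, (∀ j, 0 ≤ w j) → ∑ j, w j = 1 →
        (designMatrix φ w).det ≤ (designMatrix φ ws).det) ↔
      gOpt φ ws = d) := by
  have hD : IsDOptimal φ ws ↔ gOpt φ ws = d :=
    ⟨gOpt_eq_of_isDOptimal φ hws0 hws1 hVs, isDOptimal_of_gOpt_eq φ hws0 hVs⟩
  have hG : IsGOptimal φ ws ↔ gOpt φ ws = d :=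
    ⟨gOpt_eq_of_isGOptimal φ hspan hws0 hws1 hVs, isGOptimal_of_gOpt_eq φ⟩
  exact ⟨hG.trans hD.symm, hD⟩
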